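/- arXiv:2604.26712 — 7 statements merged into one kernel-verified Lean document; each statement's English description precedes it below -/
import Mathlib

section
/- Let φ be a linear endomorphism of a k-vector space V. The image of the localization map φ̇: V → V_x is naturally isomorphic, as a k[x]-module, to the direct limit of the inductive system V → Im(φ) → Im(φ²) → ⋯ where each transition map is given by φ. -/
/-! Every element of the direct limit already comes from the level `V = Im φ⁰`, since an element
`φⁱ v` of level `i` is the image of `v` under the transition map. The cocone `w ↦ w / Xⁱ` into
`V_X` therefore sends the direct limit onto the image of `V`, and an element `v` of level `0`
dies in `V_X` exactly when some `φⁿ v` vanishes, i.e. exactly when it dies in the direct limit. -/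

open Polynomial

section PowersLocalization

variable {R : Type*} [CommSemiring R] {M : Type*} [AddCommMonoid M] [Module R M] {x : R}
  {G : ℕ → Submodule R M} {f : ∀ i j, i ≤ j → G i →ₗ[R] G j}

variable (x G) in
noncomputable def toLocalizedDivPow (i : ℕ) : G i →ₗ[R] LocalizedModule (Submonoid.powers x) M :=
  LocalizedModule.divBy (Submonoid.pow x i) ∘ₗ LocalizedModule.mkLinearMap _ M ∘ₗ (G i).subtype

theorem toLocalizedDivPow_apply (i : ℕ) (w : G i) :
    toLocalizedDivPow x G i w = LocalizedModule.mk (w : M) (Submonoid.pow x i) := by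
  simp [toLocalizedDivPow, LocalizedModule.liftOn_mk]

theorem toLocalizedDivPow_comp_transition
    (hf : ∀ i j h (w : G i), (f i j h w : M) = x ^ (j - i) • (w : M))
    (i j : ℕ) (h : i ≤ j) (w : G i) :
    toLocalizedDivPow x G j (f i j h w) = toLocalizedDivPow x G i w := by
  have hj : Submonoid.pow x j = Submonoid.pow x (j - i) * Submonoid.pow x i := by
    ext; simp [Submonoid.pow_apply, ← pow_add, Nat.sub_add_cancel h]
  rw [toLocalizedDivPow_apply, toLocalizedDivPow_apply, hf, hj]
  exact LocalizedModule.mk_cancel_common_left (Submonoid.pow x (j - i)) _ _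

namespace Module.DirectLimit

noncomputable def liftToLocalized
    (hf : ∀ i j h (w : G i), (f i j h w : M) = x ^ (j - i) • (w : M)) :
    DirectLimit (fun i => G i) f →ₗ[R] LocalizedModule (Submonoid.powers x) M :=
  lift R ℕ (fun i => G i) f (toLocalizedDivPow x G) (toLocalizedDivPow_comp_transition hf)

theorem liftToLocalized_of_zero
    (hf : ∀ i j h (w : G i), (f i j h w : M) = x ^ (j - i) • (w : M)) (v : G 0) :
    liftToLocalized hf (of R ℕ (fun i => G i) f 0 v) =
      LocalizedModule.mkLinearMap (Submonoid.powers x) M v := by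
  have h0 : Submonoid.pow x 0 = 1 := by ext; simp [Submonoid.pow_apply]
  rw [liftToLocalized, lift_of, toLocalizedDivPow_apply, h0, LocalizedModule.mkLinearMap_apply]

theorem of_zero_surjective (hG : ∀ i, (G i : Set M) = Set.range (x ^ i • · : M → M))
    (hf : ∀ i j h (w : G i), (f i j h w : M) = x ^ (j - i) • (w : M)) :
    Function.Surjective (of R ℕ (fun i => G i) f 0) := by
  intro z
  obtain ⟨i, w, rfl⟩ := exists_of z
  obtain ⟨v, hv⟩ : (w : M) ∈ Set.range (x ^ i • · : M → M) := hG i ▸ w.2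
  have hv0 : v ∈ G 0 := by
    rw [← SetLike.mem_coe, hG]
    exact ⟨v, by simp⟩
  refine ⟨⟨v, hv0⟩, ?_⟩
  rw [← of_f (hij := Nat.zero_le i)]
  congr 1
  ext
  simp [hf, hv]

theorem liftToLocalized_injective (hG : ∀ i, (G i : Set M) = Set.range (x ^ i • · : M → M))
    (hf : ∀ i j h (w : G i), (f i j h w : M) = x ^ (j - i) • (w : M)) :
    Function.Injective (liftToLocalized hf) := by
  intro a b hab
  obtain ⟨v, rfl⟩ := of_zero_surjective hG hf a
  obtain ⟨v', rfl⟩ := of_zero_surjective hG hf b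
  rw [liftToLocalized_of_zero, liftToLocalized_of_zero, LocalizedModule.mkLinearMap_apply,
    LocalizedModule.mkLinearMap_apply, LocalizedModule.mk_eq] at hab
  obtain ⟨⟨_, n, rfl⟩, hn⟩ := hab
  have hfv : f 0 n (Nat.zero_le n) v = f 0 n (Nat.zero_le n) v' := by
    ext
    simpa [hf, Submonoid.smul_def] using hn
  rw [← of_f (hij := Nat.zero_le n), hfv, of_f]

theorem range_liftToLocalized (hG : ∀ i, (G i : Set M) = Set.range (x ^ i • · : M → M))
    (hf : ∀ i j h (w : G i), (f i j h w : M) = x ^ (j - i) • (w : M)) :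
    LinearMap.range (liftToLocalized hf) =
      LinearMap.range (LocalizedModule.mkLinearMap (Submonoid.powers x) M) := by
  have hG0 : G 0 = ⊤ := by
    rw [eq_top_iff]
    intro v _
    rw [← SetLike.mem_coe, hG]
    exact ⟨v, by simp⟩
  have hcomp : liftToLocalized hf ∘ₗ of R ℕ (fun i => G i) f 0 =
      LocalizedModule.mkLinearMap (Submonoid.powers x) M ∘ₗ (G 0).subtype :=
    LinearMap.ext (liftToLocalized_of_zero hf)
  rw [← LinearMap.range_comp_of_range_eq_top _
    (LinearMap.range_eq_top.mpr (of_zero_surjective hG hf)), hcomp, LinearMap.range_comp,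
    Submodule.range_subtype, hG0, Submodule.map_top]

noncomputable def equivRangeMkLinearMap (hG : ∀ i, (G i : Set M) = Set.range (x ^ i • · : M → M))
    (hf : ∀ i j h (w : G i), (f i j h w : M) = x ^ (j - i) • (w : M)) :
    DirectLimit (fun i => G i) f ≃ₗ[R]
      LinearMap.range (LocalizedModule.mkLinearMap (Submonoid.powers x) M) :=
  (LinearEquiv.ofInjective _ (liftToLocalized_injective hG hf)).trans
    (LinearEquiv.ofEq _ _ (range_liftToLocalized hG hf))

end Module.DirectLimit

end PowersLocalization

theorem stmt_3_general (k : Type*) [Field k] (V : Type*) [AddCommGroup V] [Module k V]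
    [Module (Polynomial k) V]
    (φ : V →ₗ[k] V) (hφ : ∀ v : V, (X : Polynomial k) • v = φ v)
    (G : ℕ → Submodule (Polynomial k) V)
    (hG : ∀ i : ℕ, (G i : Set V) = Set.range (φ ^ i))
    (f : ∀ i j : ℕ, i ≤ j → G i →ₗ[Polynomial k] G j)
    (hf : ∀ (i j : ℕ) (h : i ≤ j) (x : G i), ((f i j h x : V)) = (φ ^ (j - i)) x) :
    Nonempty (Module.DirectLimit (fun i => G i) f ≃ₗ[Polynomial k]
      LinearMap.range (LocalizedModule.mkLinearMap
        (Submonoid.powers (X : Polynomial k)) V)) := by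
  have hpow : ∀ (n : ℕ) (v : V), (X : Polynomial k) ^ n • v = (φ ^ n) v := by
    intro n
    induction n with
    | zero => simp
    | succ n ih => intro v; rw [pow_succ, mul_smul, hφ, ih, pow_succ, Module.End.mul_apply]
  refine ⟨Module.DirectLimit.equivRangeMkLinearMap (fun i => ?_) (fun i j h w => ?_)⟩
  · rw [hG]
    exact congrArg Set.range (funext fun v => (hpow i v).symm)
  · rw [hf, hpow]

theorem stmt_3 (k : Type*) [Field k] (V : Type*) [AddCommGroup V] [Module k V]
    [Module (Polynomial k) V] [IsScalarTower k (Polynomial k) V]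
    (φ : V →ₗ[k] V) (hφ : ∀ v : V, (X : Polynomial k) • v = φ v)
    (G : ℕ → Submodule (Polynomial k) V)
    (hG : ∀ i : ℕ, (G i : Set V) = Set.range (φ ^ i))
    (f : ∀ i j : ℕ, i ≤ j → G i →ₗ[Polynomial k] G j)
    (hf : ∀ (i j : ℕ) (h : i ≤ j) (x : G i), ((f i j h x : V)) = (φ ^ (j - i)) x) :
    Nonempty (Module.DirectLimit (fun i => G i) f ≃ₗ[Polynomial k]
      LinearMap.range (LocalizedModule.mkLinearMap
        (Submonoid.powers (X : Polynomial k)) V)) :=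
  stmt_3_general k V φ hφ G hG f hf
end

section
/- If the localization map φ̇: V → V_x admits a k[x]-module section, then V decomposes as a direct sum V = U ⊕ W of φ-invariant subspaces such that every vector of U is annihilated by some power of φ and φ restricted to W is injective. -/
open Polynomial

theorem stmt_5 (k : Type*) [Field k] (V : Type*) [AddCommGroup V] [Module k V]
    [Module (Polynomial k) V] [IsScalarTower k (Polynomial k) V]
    (φ : V →ₗ[k] V) (hφ : ∀ v : V, (X : Polynomial k) • v = φ v)
    (hsec : ∃ σ : LocalizedModule (Submonoid.powers (X : Polynomial k)) V
        →ₗ[Polynomial k] V,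
      (LocalizedModule.mkLinearMap (Submonoid.powers (X : Polynomial k)) V) ∘ₗ σ
        = LinearMap.id) :
    ∃ U W : Submodule k V, IsCompl U W ∧
      (∀ u ∈ U, φ u ∈ U) ∧ (∀ w ∈ W, φ w ∈ W) ∧
      (∀ u ∈ U, ∃ n : ℕ, (φ ^ n) u = 0) ∧
      (∀ w ∈ W, φ w = 0 → w = 0) := by
  obtain ⟨σ, hσ⟩ := hsec
  set mk := LocalizedModule.mkLinearMap (Submonoid.powers (X : Polynomial k)) V
    with hmk
  have hpow : ∀ (n : ℕ) (v : V), (X : Polynomial k) ^ n • v = (φ ^ n) v := by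
    intro n
    induction n with
    | zero => intro v; simp
    | succ n ih =>
      intro v
      rw [pow_succ, mul_smul, hφ v, ih (φ v), pow_succ]
      rfl
  have hmkσ : ∀ y, mk (σ y) = y := fun y => by
    simpa using LinearMap.congr_fun hσ y
  set p : V →ₗ[Polynomial k] V := σ ∘ₗ mk with hp
  have hmkp : ∀ v, mk (p v) = mk v := fun v => hmkσ (mk v)
  have hpp : ∀ v, p (p v) = p v := fun v => by
    show σ (mk (σ (mk v))) = σ (mk v)
    rw [hmkσ]
  have hzero : ∀ v : V, mk v = 0 ↔ ∃ s : Submonoid.powers (X : Polynomial k), s • v = 0 :=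
    fun v => IsLocalizedModule.eq_zero_iff (Submonoid.powers (X : Polynomial k)) mk
  refine ⟨(LinearMap.ker p).restrictScalars k, (LinearMap.range p).restrictScalars k,
    ?_, ?_, ?_, ?_, ?_⟩
  · constructor
    · rw [disjoint_iff_inf_le]
      rintro v ⟨hv1, u, hu⟩
      have hvp : p v = v := by rw [← hu, hpp]
      have h : p v = 0 := hv1
      rw [hvp] at h
      simpa using h
    · rw [codisjoint_iff_le_sup]
      intro v _
      have h1 : v - p v ∈ (LinearMap.ker p).restrictScalars k := by
        simp [LinearMap.mem_ker, map_sub, hpp v]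
      have h2 : p v ∈ (LinearMap.range p).restrictScalars k := ⟨v, rfl⟩
      simpa using Submodule.add_mem_sup h1 h2
  · intro u hu
    simp only [Submodule.restrictScalars_mem, LinearMap.mem_ker] at hu ⊢
    rw [← hφ u, map_smul, hu, smul_zero]
  · rintro w ⟨v, rfl⟩
    exact ⟨(X : Polynomial k) • v, by rw [map_smul, hφ]⟩
  · intro u hu
    simp only [Submodule.restrictScalars_mem, LinearMap.mem_ker] at hu
    have h0 : mk u = 0 := by
      have h := hmkp u
      rw [hu, map_zero] at h
      exact h.symm
    obtain ⟨⟨s, n, rfl⟩, hs⟩ := (hzero u).mp h0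
    exact ⟨n, by rw [← hpow]; exact hs⟩
  · rintro w ⟨v, rfl⟩ hw
    have h0 : mk (p v) = 0 := by
      apply (hzero (p v)).mpr
      refine ⟨⟨(X : Polynomial k), 1, pow_one X⟩, ?_⟩
      rw [Submonoid.smul_def]
      simpa [hφ] using hw
    rw [hmkp v] at h0
    show σ (mk v) = 0
    rw [h0, map_zero]
end

section
/- If V = U ⊕ W is a decomposition into φ-invariant subspaces such that every vector of U is annihilated by some power of φ and φ restricted to W is an isomorphism, then the localization map φ̇: V → V_x admits a k[x]-module section. -/
open Polynomial

/-!
Both summands are `k[X]`-submodules, so the projection `π : V → W` along `U` is `k[X]`-linear.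
Since `X` acts invertibly on `W`, `π` extends to `V_x` by `v / s ↦ s⁻¹ π v`; composing with
`W ⊆ V` gives the section, because `v - π v ∈ U` is killed by a power of `X`.
-/

theorem LocalizedModule.exists_rightInverse_mkLinearMap_of_isCompl {R M : Type*} [CommRing R]
    [AddCommGroup M] [Module R M] {S : Submonoid R} {T N : Submodule R M} (hTN : IsCompl T N)
    (hT : ∀ v ∈ T, ∃ s : S, s • v = 0)
    (hN : ∀ s : S, IsUnit (algebraMap R (Module.End R N) s)) :
    ∃ σ : LocalizedModule S M →ₗ[R] M, mkLinearMap S M ∘ₗ σ = LinearMap.id := by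
  refine ⟨N.subtype ∘ₗ lift S (N.projectionOnto T hTN.symm) hN, LinearMap.ext fun x => ?_⟩
  induction x using LocalizedModule.induction_on with
  | h v s =>
  set w := lift S (N.projectionOnto T hTN.symm) hN (mk v s)
  have hsw : s • (w : M) = N.projection T hTN.symm v :=
    congrArg Subtype.val ((Module.End.algebraMap_isUnit_inv_apply_eq_iff _ (hN s) _ _).mp rfl).symm
  obtain ⟨u, hu⟩ := hT _ (Submodule.projection_apply_mem hTN v)
  refine mk_eq.mpr ⟨u, ?_⟩
  calc u • s • (w : M) = u • s • (w : M) + u • T.projection N hTN v := by rw [hu, add_zero]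
    _ = u • (1 : S) • v := by
      rw [← smul_add, hsw, add_comm, Submodule.projection_add_projection_eq_self, one_smul]

section PolynomialModule

variable {k V : Type*} [CommSemiring k] [AddCommMonoid V] [Module k V] [Module k[X] V]

theorem Polynomial.smul_mem_of_X_smul_mem [IsScalarTower k k[X] V] {W : Submodule k V}
    (hW : ∀ w ∈ W, (X : k[X]) • w ∈ W) (p : k[X]) {w : V} (hw : w ∈ W) : p • w ∈ W := by
  induction p using Polynomial.induction_on generalizing w with
  | C a => rw [← algebraMap_eq, algebraMap_smul]; exact W.smul_mem a hw
  | add p q hp hq => rw [add_smul]; exact W.add_mem (hp hw) (hq hw)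
  | monomial n a ih =>
    rw [pow_succ', ← mul_assoc, mul_comm _ X, mul_assoc, mul_smul]
    exact hW _ (ih hw)

def Submodule.toPolynomialSubmodule [IsScalarTower k k[X] V] (W : Submodule k V)
    (hW : ∀ w ∈ W, (X : k[X]) • w ∈ W) : Submodule k[X] V where
  carrier := W
  add_mem' := W.add_mem
  zero_mem' := W.zero_mem
  smul_mem' p _ hw := smul_mem_of_X_smul_mem hW p hw

variable (φ : V →ₗ[k] V) (hφ : ∀ v : V, (X : k[X]) • v = φ v)
include hφ

theorem Polynomial.X_pow_smul_eq_pow_apply (n : ℕ) (v : V) : (X ^ n : k[X]) • v = (φ ^ n) v := by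
  induction n generalizing v with
  | zero => simp
  | succ n ih => rw [pow_succ', mul_smul, ih, hφ, pow_succ', Module.End.mul_apply]

theorem Polynomial.isUnit_algebraMap_X_of_bijOn {N : Submodule k[X] V}
    (hN : Set.BijOn φ N N) : IsUnit (algebraMap k[X] (Module.End k[X] N) X) := by
  rw [Module.End.isUnit_iff]
  constructor
  · intro a b hab
    have := congrArg Subtype.val hab
    simp only [Module.algebraMap_end_apply, Submodule.coe_smul, hφ] at this
    exact Subtype.ext (hN.injOn a.2 b.2 this)
  · intro b
    obtain ⟨a, ha, hab⟩ := hN.surjOn b.2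
    exact ⟨⟨a, ha⟩, Subtype.ext ((hφ a).trans hab)⟩

end PolynomialModule

theorem stmt_8_general (k : Type*) [Field k] (V : Type*) [AddCommGroup V] [Module k V]
    [Module (Polynomial k) V] [IsScalarTower k (Polynomial k) V]
    (φ : V →ₗ[k] V) (hφ : ∀ v : V, (X : Polynomial k) • v = φ v)
    (U W : Submodule k V) (hUW : IsCompl U W)
    (hUinv : ∀ u ∈ U, φ u ∈ U)
    (hUnil : ∀ u ∈ U, ∃ n : ℕ, (φ ^ n) u = 0)
    (hWiso : Set.BijOn φ (W : Set V) (W : Set V)) :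
    ∃ σ : LocalizedModule (Submonoid.powers (X : Polynomial k)) V →ₗ[Polynomial k] V,
      (LocalizedModule.mkLinearMap (Submonoid.powers (X : Polynomial k)) V) ∘ₗ σ
        = LinearMap.id := by
  set T := U.toPolynomialSubmodule fun u hu => hφ u ▸ hUinv u hu
  set N := W.toPolynomialSubmodule fun w hw => hφ w ▸ hWiso.mapsTo hw
  -- `T` and `N` restrict to `U` and `W` definitionally.
  have hTN : IsCompl T N := (Submodule.isCompl_restrictScalars_iff k).mp hUW
  refine LocalizedModule.exists_rightInverse_mkLinearMap_of_isCompl hTN ?_ ?_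
  · intro u hu
    obtain ⟨n, hn⟩ := hUnil u hu
    exact ⟨⟨X ^ n, n, rfl⟩, (X_pow_smul_eq_pow_apply φ hφ n u).trans hn⟩
  · rintro ⟨_, n, rfl⟩
    simpa using (isUnit_algebraMap_X_of_bijOn φ hφ hWiso).pow n

theorem stmt_8 (k : Type*) [Field k] (V : Type*) [AddCommGroup V] [Module k V]
    [Module (Polynomial k) V] [IsScalarTower k (Polynomial k) V]
    (φ : V →ₗ[k] V) (hφ : ∀ v : V, (X : Polynomial k) • v = φ v)
    (U W : Submodule k V) (hUW : IsCompl U W)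
    (hUinv : ∀ u ∈ U, φ u ∈ U) (hWinv : ∀ w ∈ W, φ w ∈ W)
    (hUnil : ∀ u ∈ U, ∃ n : ℕ, (φ ^ n) u = 0)
    (hWiso : Set.BijOn φ (W : Set V) (W : Set V)) :
    ∃ σ : LocalizedModule (Submonoid.powers (X : Polynomial k)) V →ₗ[Polynomial k] V,
      (LocalizedModule.mkLinearMap (Submonoid.powers (X : Polynomial k)) V) ∘ₗ σ
        = LinearMap.id :=
  stmt_8_general k V φ hφ U W hUW hUinv hUnil hWiso
end

section
/- Assume the localization map φ̇: V → V_x is surjective. Then φ̇ admits a k[x]-module section if and only if φ = φ₁ + φ₂ for endomorphisms φ₁, φ₂ of V such that i(φ₁) ≤ 1 (i.e. V = Ker(φ₁) ⊕ Im(φ₁) with φ₁ restricting to an injection on Im(φ₁)), φ₂ is pointwise nilpotent (every vector is killed by some power of φ₂), and φ₁ ∘ φ₂ = 0 = φ₂ ∘ φ₁. -/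
/-!
A section `σ` of the localization map `ι : V → V_X` makes `q = σ ∘ ι` an idempotent
`k[X]`-endomorphism with kernel the `X`-torsion `ker ι` and image `range σ`, on which `X` acts
bijectively because it does so on `V_X`; then `φ₁ = X q` and `φ₂ = X (1 - q)` work.
Conversely, `i(φ₁) ≤ 1` gives `V = ker φ₁ + im φ₁` with `φ₁` bijective on `im φ₁`. Since
`φ₁ φ₂ = 0 = φ₂ φ₁`, `X` acts as `φ₁` on `im φ₁` and as the locally nilpotent `φ₂` on `ker φ₁`,
so `ker φ₁` is `X`-torsion and the projection onto `im φ₁` extends over the localization to a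
section.
-/

open Polynomial LinearMap

section Localization

variable {R M : Type*} [CommRing R] [AddCommGroup M] [Module R M] {x : R}

local notation "ι" => LocalizedModule.mkLinearMap (Submonoid.powers x) M

theorem LocalizedModule.mkLinearMap_powers_eq_zero_iff {m : M} :
    ι m = 0 ↔ ∃ n : ℕ, x ^ n • m = 0 := by
  rw [IsLocalizedModule.eq_zero_iff (Submonoid.powers x)]
  exact ⟨fun ⟨⟨_, n, rfl⟩, h⟩ => ⟨n, h⟩, fun ⟨n, h⟩ => ⟨⟨x ^ n, n, rfl⟩, h⟩⟩

theorem LocalizedModule.bijective_pow_smul (n : ℕ) :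
    Function.Bijective fun u : LocalizedModule (Submonoid.powers x) M => x ^ n • u :=
  (Module.End.isUnit_iff _).mp
    (IsLocalizedModule.map_units ι (⟨x ^ n, n, rfl⟩ : Submonoid.powers x))

theorem ker_pow_smul_section_comp_mkLinearMap
    {σ : LocalizedModule (Submonoid.powers x) M →ₗ[R] M} (hσ : ι ∘ₗ σ = LinearMap.id) (n : ℕ) :
    ker (x ^ n • (σ ∘ₗ ι)) = ker ι := by
  have hσinj : Function.Injective σ :=
    Function.LeftInverse.injective (g := ι) (LinearMap.congr_fun hσ)
  ext m
  rw [mem_ker, mem_ker, LinearMap.smul_apply, comp_apply, ← map_smul,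
    hσinj.eq_iff' (map_zero σ), (LocalizedModule.bijective_pow_smul n).1.eq_iff' (smul_zero _)]

theorem range_pow_smul_section_comp_mkLinearMap
    {σ : LocalizedModule (Submonoid.powers x) M →ₗ[R] M} (hσ : ι ∘ₗ σ = LinearMap.id) (n : ℕ) :
    range (x ^ n • (σ ∘ₗ ι)) = range σ := by
  ext m
  constructor
  · rintro ⟨m', rfl⟩
    exact ⟨x ^ n • ι m', by simp⟩
  · rintro ⟨u, rfl⟩
    obtain ⟨u', rfl⟩ := (LocalizedModule.bijective_pow_smul n).2 u
    have hισ : ι (σ u') = u' := LinearMap.congr_fun hσ u'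
    exact ⟨σ u', by rw [LinearMap.smul_apply, comp_apply, hισ, map_smul]⟩

theorem isIdempotentElem_section_comp_mkLinearMap
    {σ : LocalizedModule (Submonoid.powers x) M →ₗ[R] M} (hσ : ι ∘ₗ σ = LinearMap.id) :
    IsIdempotentElem (σ ∘ₗ ι) := by
  rw [IsIdempotentElem, Module.End.mul_eq_comp, LinearMap.comp_assoc, ← LinearMap.comp_assoc ι,
    hσ, id_comp]

theorem exists_section_mkLinearMap_of_bijective {W : Submodule R M}
    (hW : Function.Bijective fun w : W => x • w) (hWT : Codisjoint W (ker ι)) :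
    ∃ σ : LocalizedModule (Submonoid.powers x) M →ₗ[R] M, ι ∘ₗ σ = LinearMap.id := by
  have hunit (n : ℕ) : IsUnit (algebraMap R (Module.End R W) (x ^ n)) :=
    map_pow (algebraMap R (Module.End R W)) x n ▸ ((Module.End.isUnit_iff _).mpr hW).pow n
  have hdisj : Disjoint W (ker ι) := by
    refine Submodule.disjoint_def.mpr fun w hw hwT => ?_
    obtain ⟨n, hn⟩ := LocalizedModule.mkLinearMap_powers_eq_zero_iff.mp hwT
    have h0 : algebraMap R (Module.End R W) (x ^ n) ⟨w, hw⟩ = 0 := Subtype.ext hn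
    exact congrArg Subtype.val
      (((Module.End.isUnit_iff _).mp (hunit n)).1 (h0.trans (map_zero _).symm))
  have hcompl : IsCompl W (ker ι) := ⟨hdisj, hWT⟩
  have hunit' : ∀ s : Submonoid.powers x, IsUnit (algebraMap R (Module.End R W) s) := by
    rintro ⟨_, n, rfl⟩
    exact hunit n
  let τ := IsLocalizedModule.lift (Submonoid.powers x) ι (W.projectionOnto (ker ι) hcompl) hunit'
  refine ⟨W.subtype ∘ₗ τ, IsLocalizedModule.linearMap_ext (Submonoid.powers x) ι ι ?_⟩
  ext m
  have hτ : τ (ι m) = W.projectionOnto (ker ι) hcompl m :=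
    LinearMap.congr_fun (IsLocalizedModule.lift_comp _ _ _ hunit') m
  have hsub : ι (m - W.projection (ker ι) hcompl m) = 0 := Submodule.sub_projection_mem hcompl m
  rw [map_sub, sub_eq_zero] at hsub
  change ι (τ (ι m) : M) = ι m
  rw [hτ, Submodule.coe_projectionOnto_apply, hsub]

end Localization

theorem LinearMap.restrictScalars_pow {R S M : Type*} [Semiring R] [Semiring S] [SMul R S]
    [AddCommMonoid M] [Module R M] [Module S M] [IsScalarTower R S M]
    (f : Module.End S M) (n : ℕ) : (f ^ n).restrictScalars R = f.restrictScalars R ^ n := by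
  induction n with
  | zero => rfl
  | succ n ih => rw [pow_succ, pow_succ, ← ih]; rfl

section IndexLeOne

variable {R M : Type*} [Ring R] [AddCommGroup M] [Module R M] {f : Module.End R M}

theorem Module.End.disjoint_ker_range_of_ker_eq_ker_sq (h : ker f = ker (f ^ 2)) :
    Disjoint (ker f) (range f) := by
  refine Submodule.disjoint_def.mpr ?_
  rintro _ hv ⟨u, rfl⟩
  rwa [← mem_ker, h, mem_ker, sq, Module.End.mul_apply]

theorem Module.End.codisjoint_ker_range_of_range_eq_range_sq (h : range f = range (f ^ 2)) :
    Codisjoint (ker f) (range f) := by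
  refine codisjoint_iff_le_sup.mpr fun v _ => ?_
  obtain ⟨u, hu⟩ : f v ∈ range (f ^ 2) := h ▸ mem_range_self f v
  rw [sq, Module.End.mul_apply] at hu
  exact Submodule.mem_sup.mpr ⟨v - f u, by simp [hu], f u, mem_range_self f u, sub_add_cancel v _⟩

theorem Module.End.bijOn_range_of_ker_eq_ker_sq_of_range_eq_range_sq
    (hker : ker f = ker (f ^ 2)) (hrange : range f = range (f ^ 2)) :
    Set.BijOn f (range f) (range f) := by
  refine ⟨fun v _ => mem_range_self f v, fun a ha b hb hab => ?_, fun w hw => ?_⟩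
  · rw [← sub_eq_zero]
    refine Submodule.disjoint_def.mp (disjoint_ker_range_of_ker_eq_ker_sq hker) _ ?_
      (Submodule.sub_mem _ ha hb)
    rw [mem_ker, map_sub, hab, sub_self]
  · obtain ⟨u, rfl⟩ : w ∈ range (f ^ 2) := hrange ▸ hw
    exact ⟨f u, mem_range_self f u, by rw [sq, Module.End.mul_apply]⟩

end IndexLeOne

section PolynomialModule

variable {k V : Type*} [CommRing k] [AddCommGroup V] [Module k V] [Module k[X] V]
  {φ : V →ₗ[k] V}

theorem pow_smul_eq_pow_apply_of_mem_ker (hφ : ∀ v : V, (X : k[X]) • v = φ v)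
    {φ₁ φ₂ : V →ₗ[k] V} (hsum : φ = φ₁ + φ₂) (h₁₂ : φ₁ ∘ₗ φ₂ = 0) {t : V} (ht : t ∈ ker φ₁)
    (n : ℕ) : (X ^ n : k[X]) • t = (φ₂ ^ n) t := by
  induction n generalizing t with
  | zero => rw [pow_zero, one_smul, pow_zero, Module.End.one_apply]
  | succ n ih =>
    have hφ₂t : φ₂ t ∈ ker φ₁ := LinearMap.congr_fun h₁₂ t
    rw [pow_succ, mul_smul, hφ, hsum, LinearMap.add_apply, ht, zero_add, ih hφ₂t, pow_succ,
      Module.End.mul_apply]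

variable [IsScalarTower k k[X] V]

def Submodule.ofSMulXMem (P : Submodule k V) (hP : ∀ v ∈ P, (X : k[X]) • v ∈ P) :
    Submodule k[X] V where
  carrier := P
  add_mem' := P.add_mem
  zero_mem' := P.zero_mem
  smul_mem' c v hv := by
    have hXpow (n : ℕ) : (X ^ n : k[X]) • v ∈ P := by
      induction n with
      | zero => rwa [pow_zero, one_smul]
      | succ n ih => rw [pow_succ', mul_smul]; exact hP _ ih
    induction c using Polynomial.induction_on' with
    | add p q hp hq => rw [add_smul]; exact P.add_mem hp hq
    | monomial n a =>
      rw [← C_mul_X_pow_eq_monomial, mul_smul, ← Polynomial.algebraMap_eq, algebraMap_smul]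
      exact P.smul_mem a (hXpow n)

def Module.End.IsCoreNilpotentDecomposition (φ φ₁ φ₂ : V →ₗ[k] V) : Prop :=
  φ = φ₁ + φ₂ ∧
    (ker φ₁ = ker (φ₁ ^ 2) ∧ range φ₁ = range (φ₁ ^ 2)) ∧
    (∀ v : V, ∃ n : ℕ, (φ₂ ^ n) v = 0) ∧
    (φ₁ ∘ₗ φ₂ = 0 ∧ φ₂ ∘ₗ φ₁ = 0)

theorem exists_isCoreNilpotentDecomposition_of_section (hφ : ∀ v : V, (X : k[X]) • v = φ v)
    {σ : LocalizedModule (Submonoid.powers (X : k[X])) V →ₗ[k[X]] V}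
    (hσ : LocalizedModule.mkLinearMap (Submonoid.powers (X : k[X])) V ∘ₗ σ = LinearMap.id) :
    ∃ φ₁ φ₂ : V →ₗ[k] V, Module.End.IsCoreNilpotentDecomposition φ φ₁ φ₂ := by
  set ι := LocalizedModule.mkLinearMap (Submonoid.powers (X : k[X])) V
  set q : Module.End k[X] V := σ ∘ₗ ι
  have hq : IsIdempotentElem q := isIdempotentElem_section_comp_mkLinearMap hσ
  have hpow {e : Module.End k[X] V} (he : IsIdempotentElem e) {n : ℕ} (hn : n ≠ 0) :
      ((X : k[X]) • e).restrictScalars k ^ n = ((X ^ n : k[X]) • e).restrictScalars k := by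
    rw [← restrictScalars_pow, _root_.smul_pow, he.pow_eq hn]
  have hprod {e f : Module.End k[X] V} (hef : e * f = 0) :
      ((X : k[X]) • e).restrictScalars k ∘ₗ ((X : k[X]) • f).restrictScalars k = 0 := by
    rw [← restrictScalars_comp, ← Module.End.mul_eq_comp, smul_mul_smul_comm, hef, smul_zero,
      restrictScalars_zero]
  set φ₁ := ((X : k[X]) • q).restrictScalars k
  have hker {n : ℕ} (hn : n ≠ 0) : ker (φ₁ ^ n) = (ker ι).restrictScalars k := by
    rw [hpow hq hn, ker_restrictScalars, ker_pow_smul_section_comp_mkLinearMap hσ]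
  have hrange {n : ℕ} (hn : n ≠ 0) : range (φ₁ ^ n) = (range σ).restrictScalars k := by
    rw [hpow hq hn, range_restrictScalars, range_pow_smul_section_comp_mkLinearMap hσ]
  refine ⟨φ₁, ((X : k[X]) • (1 - q)).restrictScalars k, ?_, ⟨?_, ?_⟩, fun v => ?_,
    hprod hq.mul_one_sub_self, hprod hq.one_sub_mul_self⟩
  · ext v
    simp [φ₁, ← hφ, ← smul_add]
  · rw [hker two_ne_zero, ← hker one_ne_zero, pow_one]
  · rw [hrange two_ne_zero, ← hrange one_ne_zero, pow_one]
  · have hvq : ι (v - q v) = 0 := by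
      rw [map_sub, sub_eq_zero]
      exact (LinearMap.congr_fun hσ (ι v)).symm
    obtain ⟨n, hn⟩ := LocalizedModule.mkLinearMap_powers_eq_zero_iff.mp hvq
    refine ⟨n + 1, ?_⟩
    rw [hpow hq.one_sub n.succ_ne_zero, restrictScalars_apply, LinearMap.smul_apply, pow_succ',
      mul_smul]
    simp [hn]

theorem exists_section_of_isCoreNilpotentDecomposition (hφ : ∀ v : V, (X : k[X]) • v = φ v)
    {φ₁ φ₂ : V →ₗ[k] V} (h : Module.End.IsCoreNilpotentDecomposition φ φ₁ φ₂) :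
    ∃ σ : LocalizedModule (Submonoid.powers (X : k[X])) V →ₗ[k[X]] V,
      LocalizedModule.mkLinearMap (Submonoid.powers (X : k[X])) V ∘ₗ σ = LinearMap.id := by
  obtain ⟨hsum, ⟨hker, hrange⟩, hnil, h₁₂, h₂₁⟩ := h
  have hXφ₁ : ∀ w ∈ range φ₁, (X : k[X]) • w = φ₁ w := by
    rintro _ ⟨u, rfl⟩
    have h₂₁u : φ₂ (φ₁ u) = 0 := LinearMap.congr_fun h₂₁ u
    rw [hφ, hsum, LinearMap.add_apply, h₂₁u, add_zero]
  let W := (range φ₁).ofSMulXMem fun w hw => (hXφ₁ w hw).symm ▸ mem_range_self φ₁ w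
  have hbij : Set.BijOn (fun w : V => (X : k[X]) • w) (range φ₁ : Set V) (range φ₁ : Set V) :=
    (Module.End.bijOn_range_of_ker_eq_ker_sq_of_range_eq_range_sq hker hrange).congr
      fun w hw => (hXφ₁ w hw).symm
  refine exists_section_mkLinearMap_of_bijective (W := W) hbij.bijective ?_
  refine codisjoint_iff_le_sup.mpr fun v _ => ?_
  have hcod := Module.End.codisjoint_ker_range_of_range_eq_range_sq hrange
  obtain ⟨t, ht, w, hw, rfl⟩ := Submodule.mem_sup.mp (hcod.eq_top ▸ Submodule.mem_top (x := v))
  refine Submodule.mem_sup.mpr ⟨w, hw, t, ?_, add_comm w t⟩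
  obtain ⟨n, hn⟩ := hnil t
  exact LocalizedModule.mkLinearMap_powers_eq_zero_iff.mpr
    ⟨n, (pow_smul_eq_pow_apply_of_mem_ker hφ hsum h₁₂ ht n).trans hn⟩

end PolynomialModule

theorem stmt_9_general (k : Type*) [Field k] (V : Type*) [AddCommGroup V] [Module k V]
    [Module (Polynomial k) V] [IsScalarTower k (Polynomial k) V]
    (φ : V →ₗ[k] V) (hφ : ∀ v : V, (X : Polynomial k) • v = φ v) :
    (∃ σ : LocalizedModule (Submonoid.powers (X : Polynomial k)) V →ₗ[Polynomial k] V,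
      (LocalizedModule.mkLinearMap (Submonoid.powers (X : Polynomial k)) V) ∘ₗ σ
        = LinearMap.id)
    ↔ ∃ φ₁ φ₂ : V →ₗ[k] V, φ = φ₁ + φ₂ ∧
        (LinearMap.ker φ₁ = LinearMap.ker (φ₁ ^ 2) ∧
          LinearMap.range φ₁ = LinearMap.range (φ₁ ^ 2)) ∧
        (∀ v : V, ∃ n : ℕ, (φ₂ ^ n) v = 0) ∧
        (φ₁ ∘ₗ φ₂ = 0 ∧ φ₂ ∘ₗ φ₁ = 0) :=
  ⟨fun ⟨_, hσ⟩ => exists_isCoreNilpotentDecomposition_of_section hφ hσ,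
    fun ⟨_, _, h⟩ => exists_section_of_isCoreNilpotentDecomposition hφ h⟩

theorem stmt_9 (k : Type*) [Field k] (V : Type*) [AddCommGroup V] [Module k V]
    [Module (Polynomial k) V] [IsScalarTower k (Polynomial k) V]
    (φ : V →ₗ[k] V) (hφ : ∀ v : V, (X : Polynomial k) • v = φ v)
    (hsurj : Function.Surjective
      (LocalizedModule.mkLinearMap (Submonoid.powers (X : Polynomial k)) V)) :
    (∃ σ : LocalizedModule (Submonoid.powers (X : Polynomial k)) V →ₗ[Polynomial k] V,
      (LocalizedModule.mkLinearMap (Submonoid.powers (X : Polynomial k)) V) ∘ₗ σ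
        = LinearMap.id)
    ↔ ∃ φ₁ φ₂ : V →ₗ[k] V, φ = φ₁ + φ₂ ∧
        (LinearMap.ker φ₁ = LinearMap.ker (φ₁ ^ 2) ∧
          LinearMap.range φ₁ = LinearMap.range (φ₁ ^ 2)) ∧
        (∀ v : V, ∃ n : ℕ, (φ₂ ^ n) v = 0) ∧
        (φ₁ ∘ₗ φ₂ = 0 ∧ φ₂ ∘ₗ φ₁ = 0) :=
  stmt_9_general k V φ hφ
end

section
/- Suppose the exact sequence 0 → Ker(φ̇) → V → V_x → 0 is split exact, with k[x]-linear section σ: V_x → V. Define φᵈ = σ ∘ (φ_x)⁻¹ ∘ φ̇, where φ_x is the (invertible) endomorphism induced by φ on V_x. Then: φᵈ ∘ φ ∘ φᵈ = φᵈ; φᵈ ∘ φ = φ ∘ φᵈ and this composite equals the projector σ ∘ φ̇ onto the image of σ; and φ̇ ∘ φ ∘ φᵈ = φ̇. -/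
open Polynomial

theorem stmt_14 (k : Type*) [Field k] (V : Type*) [AddCommGroup V] [Module k V]
    [Module (Polynomial k) V] [IsScalarTower k (Polynomial k) V]
    (φ : V →ₗ[k] V) (hφ : ∀ v : V, (X : Polynomial k) • v = φ v)
    (σ : LocalizedModule (Submonoid.powers (X : Polynomial k)) V →ₗ[Polynomial k] V)
    (hσ : (LocalizedModule.mkLinearMap (Submonoid.powers (X : Polynomial k)) V) ∘ₗ σ
        = LinearMap.id)
    (φx : LocalizedModule (Submonoid.powers (X : Polynomial k)) V ≃ₗ[Polynomial k]
        LocalizedModule (Submonoid.powers (X : Polynomial k)) V)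
    (hφx : ∀ y, φx y = (X : Polynomial k) • y)
    (φd : V → V)
    (hφd : ∀ v : V, φd v = σ (φx.symm
        (LocalizedModule.mkLinearMap (Submonoid.powers (X : Polynomial k)) V v))) :
    (∀ v : V, φd (φ (φd v)) = φd v) ∧
    (∀ v : V, φd (φ v) = φ (φd v)) ∧
    (∀ v : V, φd (φ v) = σ (LocalizedModule.mkLinearMap
        (Submonoid.powers (X : Polynomial k)) V v)) ∧
    (∀ v : V, LocalizedModule.mkLinearMap (Submonoid.powers (X : Polynomial k)) V
        (φ (φd v)) = LocalizedModule.mkLinearMap (Submonoid.powers (X : Polynomial k)) V v) := by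

  set ι := LocalizedModule.mkLinearMap (Submonoid.powers (X : Polynomial k)) V with hι_def
  have hσι : ∀ y, ι (σ y) = y := fun y => LinearMap.congr_fun hσ y
  have hιφ : ∀ v : V, ι (φ v) = φx (ι v) := by
    intro v
    rw [← hφ, map_smul, hφx]
  have hσφ : ∀ y, σ (φx y) = φ (σ y) := by
    intro y
    rw [hφx, map_smul, hφ]
  have hφφd : ∀ v : V, φ (φd v) = σ (ι v) := by
    intro v
    rw [hφd, ← hσφ, LinearEquiv.apply_symm_apply]
  refine ⟨?_, ?_, ?_, ?_⟩
  · intro v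
    rw [hφφd, hφd v, hφd, hσι]
  · intro v
    rw [hφφd, hφd, hιφ, LinearEquiv.symm_apply_apply]
  · intro v
    rw [hφd, hιφ, LinearEquiv.symm_apply_apply]
  · intro v
    rw [hφφd, hσι]
end

section
/- If φ is core-nilpotent of index m (i.e. Ker(φᵐ) = Ker(φ^{m+1}) and Im(φᵐ) = Im(φ^{m+1})), then the localization sequence 0 → Ker(φ̇) → V → V_x → 0 is naturally isomorphic to 0 → Ker(φᵐ) → V →^{φᵐ} Im(φᵐ) → 0, and it admits a unique k[x]-linear section given by σ = j ∘ ((φᵐ)|_{Im(φᵐ)})⁻¹, where j: Im(φᵐ) ↪ V is the inclusion and (φᵐ)|_{Im(φᵐ)}: Im(φᵐ) → Im(φ^{2m}) = Im(φᵐ) is an isomorphism. -/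
/-!
Once kernel and image of the powers of `x` stabilise at `m`, they stay constant from `m` on. So
`x` acts bijectively on the core `Im(xᵐ)`, and `Im(xᵐ) ∩ Ker(xⁿ) = 0` for every `n`. Hence
`v ↦ xᵐ v : V → Im(xᵐ)` inverts `x` and kills exactly the `x`-power torsion, i.e. it is a
localization at the powers of `x`. Every section of `V → Vₓ` takes values in `Im(xᵐ)`, because `Vₓ`
is `x`-divisible. Two sections differ by an element of `Ker(xᵐ) ∩ Im(xᵐ) = 0`.
-/

open Polynomial Module LinearMap

namespace Module.End

variable {R M : Type*} [Semiring R] [AddCommMonoid M] [Module R M] {f : End R M} {m : ℕ}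

theorem ker_pow_add_eq_ker_pow (hker : ker (f ^ m) = ker (f ^ (m + 1))) (n : ℕ) :
    ker (f ^ (m + n)) = ker (f ^ m) := by
  induction n with
  | zero => rfl
  | succ n ih =>
    rw [← add_assoc, add_right_comm, pow_add, mul_eq_comp, ker_comp, ← hker, ← ker_comp,
      ← mul_eq_comp, ← pow_add, ih]

theorem range_pow_add_eq_range_pow (hrange : range (f ^ m) = range (f ^ (m + 1))) (n : ℕ) :
    range (f ^ (m + n)) = range (f ^ m) := by
  induction n with
  | zero => rfl
  | succ n ih =>
    rw [show m + (n + 1) = n + (m + 1) by omega, pow_add, mul_eq_comp, range_comp, ← hrange,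
      ← range_comp, ← mul_eq_comp, ← pow_add, add_comm, ih]

theorem disjoint_ker_pow_range_pow (hker : ker (f ^ m) = ker (f ^ (m + 1))) (n : ℕ) :
    Disjoint (ker (f ^ n)) (range (f ^ m)) := by
  rw [Submodule.disjoint_def]
  rintro _ hw ⟨u, rfl⟩
  rwa [mem_ker, ← mul_apply, ← pow_add, add_comm, ← mem_ker, ker_pow_add_eq_ker_pow hker] at hw

theorem map_pow_range_pow (hrange : range (f ^ m) = range (f ^ (m + 1))) (n : ℕ) :
    (range (f ^ m)).map (f ^ n) = range (f ^ m) := by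
  rw [← range_comp, ← mul_eq_comp, ← pow_add, add_comm, range_pow_add_eq_range_pow hrange]

end Module.End

section Localization

variable {R M N : Type*} [CommRing R] [AddCommGroup M] [Module R M] [AddCommGroup N] [Module R N]
  {x : R} {m : ℕ}

theorem algebraMap_end_pow_apply (n : ℕ) (v : M) :
    (algebraMap R (End R M) x ^ n) v = x ^ n • v := by
  rw [← map_pow, Module.algebraMap_end_apply]

theorem range_le_range_algebraMap_end_pow (hx : IsUnit (algebraMap R (End R N) x))
    (σ : N →ₗ[R] M) (n : ℕ) : range σ ≤ range (algebraMap R (End R M) x ^ n) := by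
  rintro _ ⟨z, rfl⟩
  obtain ⟨z', rfl⟩ := ((End.isUnit_iff _).mp (hx.pow n)).2 z
  exact ⟨σ z', by simp only [algebraMap_end_pow_apply, map_smul]⟩

theorem isUnit_algebraMap_end_range_pow
    (hker : ker (algebraMap R (End R M) x ^ m) = ker (algebraMap R (End R M) x ^ (m + 1)))
    (hrange : range (algebraMap R (End R M) x ^ m) = range (algebraMap R (End R M) x ^ (m + 1))) :
    IsUnit (algebraMap R (End R (range (algebraMap R (End R M) x ^ m))) x) := by
  rw [End.isUnit_iff]
  constructor
  · rw [← ker_eq_bot, Submodule.eq_bot_iff]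
    intro w hw
    have hw₁ : (w : M) ∈ ker (algebraMap R (End R M) x ^ 1) := by
      simpa [Subtype.ext_iff] using hw
    exact Subtype.ext <|
      Submodule.disjoint_def.mp (End.disjoint_ker_pow_range_pow hker 1) _ hw₁ w.2
  · intro w
    obtain ⟨u, hu, hxu⟩ : (w : M) ∈
        (range (algebraMap R (End R M) x ^ m)).map (algebraMap R (End R M) x ^ 1) :=
      (End.map_pow_range_pow hrange 1).symm ▸ w.2
    exact ⟨⟨u, hu⟩, Subtype.ext <| by simpa using hxu⟩

theorem isLocalizedModule_rangeRestrict_pow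
    (hker : ker (algebraMap R (End R M) x ^ m) = ker (algebraMap R (End R M) x ^ (m + 1)))
    (hrange : range (algebraMap R (End R M) x ^ m) = range (algebraMap R (End R M) x ^ (m + 1))) :
    IsLocalizedModule (Submonoid.powers x) (algebraMap R (End R M) x ^ m).rangeRestrict where
  map_units := by
    rintro ⟨_, n, rfl⟩
    simpa only [map_pow] using (isUnit_algebraMap_end_range_pow hker hrange).pow n
  surj y := ⟨(y, ⟨x ^ m, m, rfl⟩), Subtype.ext <| by
    simp [Submonoid.smul_def, algebraMap_end_pow_apply]⟩
  exists_of_eq {v w} h := ⟨⟨x ^ m, m, rfl⟩, by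
    simpa [Submonoid.smul_def, Subtype.ext_iff, algebraMap_end_pow_apply] using h⟩

theorem ker_mkLinearMap_eq_ker_pow
    (hker : ker (algebraMap R (End R M) x ^ m) = ker (algebraMap R (End R M) x ^ (m + 1)))
    (hrange : range (algebraMap R (End R M) x ^ m) = range (algebraMap R (End R M) x ^ (m + 1))) :
    ker (LocalizedModule.mkLinearMap (Submonoid.powers x) M) =
      ker (algebraMap R (End R M) x ^ m) := by
  have := isLocalizedModule_rangeRestrict_pow hker hrange
  ext v
  rw [LocalizedModule.mem_ker_mkLinearMap_iff, ← IsLocalizedModule.mem_ker_iff (Submonoid.powers x)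
    (g := (algebraMap R (End R M) x ^ m).rangeRestrict), ker_rangeRestrict]

theorem exists_mkLinearMap_comp_eq_id
    (hker : ker (algebraMap R (End R M) x ^ m) = ker (algebraMap R (End R M) x ^ (m + 1)))
    (hrange : range (algebraMap R (End R M) x ^ m) = range (algebraMap R (End R M) x ^ (m + 1))) :
    ∃ σ : LocalizedModule (Submonoid.powers x) M →ₗ[R] M,
      LocalizedModule.mkLinearMap (Submonoid.powers x) M ∘ₗ σ = LinearMap.id := by
  set π := (algebraMap R (End R M) x ^ m).rangeRestrict
  have := isLocalizedModule_rangeRestrict_pow hker hrange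
  let e := IsLocalizedModule.iso (Submonoid.powers x) π
  have hu := IsLocalizedModule.map_units π (⟨x ^ m, m, rfl⟩ : Submonoid.powers x)
  have hπ (w : range (algebraMap R (End R M) x ^ m)) :
      π w = algebraMap R (End R (range (algebraMap R (End R M) x ^ m))) (x ^ m) w :=
    Subtype.ext <| by simp [π, algebraMap_end_pow_apply]
  refine ⟨(range _).subtype ∘ₗ hu.unit⁻¹.val ∘ₗ e, LinearMap.ext fun z ↦ e.injective ?_⟩
  simp only [comp_apply, LocalizedModule.mkLinearMap_apply, e, IsLocalizedModule.iso_mk_one,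
    Submodule.subtype_apply, hπ]
  exact LinearMap.congr_fun hu.mul_val_inv (e z)

theorem eq_of_mkLinearMap_comp_eq_id
    (hker : ker (algebraMap R (End R M) x ^ m) = ker (algebraMap R (End R M) x ^ (m + 1)))
    (hrange : range (algebraMap R (End R M) x ^ m) = range (algebraMap R (End R M) x ^ (m + 1)))
    {σ τ : LocalizedModule (Submonoid.powers x) M →ₗ[R] M}
    (hσ : LocalizedModule.mkLinearMap (Submonoid.powers x) M ∘ₗ σ = LinearMap.id)
    (hτ : LocalizedModule.mkLinearMap (Submonoid.powers x) M ∘ₗ τ = LinearMap.id) : σ = τ := by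
  ext z
  have hx := IsLocalizedModule.map_units (LocalizedModule.mkLinearMap (Submonoid.powers x) M)
    ⟨x, Submonoid.mem_powers x⟩
  have hr : σ z - τ z ∈ range (algebraMap R (End R M) x ^ m) :=
    sub_mem (range_le_range_algebraMap_end_pow hx σ m ⟨z, rfl⟩)
      (range_le_range_algebraMap_end_pow hx τ m ⟨z, rfl⟩)
  have hk : σ z - τ z ∈ ker (algebraMap R (End R M) x ^ m) := by
    rw [← ker_mkLinearMap_eq_ker_pow hker hrange, mem_ker, map_sub, ← comp_apply, hσ,
      ← comp_apply, hτ, sub_self]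
  exact sub_eq_zero.mp (Submodule.disjoint_def.mp (End.disjoint_ker_pow_range_pow hker m) _ hk hr)

theorem pow_apply_mkLinearMap_eq_of_comp_eq_id
    (hker : ker (algebraMap R (End R M) x ^ m) = ker (algebraMap R (End R M) x ^ (m + 1)))
    (hrange : range (algebraMap R (End R M) x ^ m) = range (algebraMap R (End R M) x ^ (m + 1)))
    {σ : LocalizedModule (Submonoid.powers x) M →ₗ[R] M}
    (hσ : LocalizedModule.mkLinearMap (Submonoid.powers x) M ∘ₗ σ = LinearMap.id) (v : M) :
    (algebraMap R (End R M) x ^ m) (σ (LocalizedModule.mkLinearMap (Submonoid.powers x) M v)) =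
      (algebraMap R (End R M) x ^ m) v := by
  rw [← sub_eq_zero, ← map_sub, ← mem_ker, ← ker_mkLinearMap_eq_ker_pow hker hrange, mem_ker,
    map_sub, ← comp_apply, hσ, id_apply, sub_self]

end Localization

theorem stmt_18_general (k : Type*) [Field k] (V : Type*) [AddCommGroup V] [Module k V]
    [Module (Polynomial k) V]
    (φ : V →ₗ[k] V) (hφ : ∀ v : V, (X : Polynomial k) • v = φ v)
    (m : ℕ)
    (hker : LinearMap.ker (φ ^ m) = LinearMap.ker (φ ^ (m + 1)))
    (hrange : LinearMap.range (φ ^ m) = LinearMap.range (φ ^ (m + 1)))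
    (Wm : Submodule (Polynomial k) V)
    (hWm : (Wm : Set V) = (LinearMap.range (φ ^ m) : Set V)) :
    -- the localization sequence is naturally isomorphic to
    -- 0 → Ker(φ^m) → V → Im(φ^m) → 0
    (LinearMap.ker (LocalizedModule.mkLinearMap
        (Submonoid.powers (X : Polynomial k)) V) : Set V)
      = (LinearMap.ker (φ ^ m) : Set V) ∧
    (∃ e : LocalizedModule (Submonoid.powers (X : Polynomial k)) V ≃ₗ[Polynomial k] Wm,
      ∀ v : V, (e (LocalizedModule.mkLinearMap
          (Submonoid.powers (X : Polynomial k)) V v) : V) = (φ ^ m) v) ∧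
    -- existence and uniqueness of the k[x]-linear section, given by
    -- σ = j ∘ ((φ^m)|_{Im(φ^m)})⁻¹
    (∃! σ : LocalizedModule (Submonoid.powers (X : Polynomial k)) V →ₗ[Polynomial k] V,
      (LocalizedModule.mkLinearMap (Submonoid.powers (X : Polynomial k)) V) ∘ₗ σ
        = LinearMap.id) ∧
    (∀ σ : LocalizedModule (Submonoid.powers (X : Polynomial k)) V →ₗ[Polynomial k] V,
      (LocalizedModule.mkLinearMap (Submonoid.powers (X : Polynomial k)) V) ∘ₗ σ
          = LinearMap.id →
      ∀ v : V,
        σ (LocalizedModule.mkLinearMap (Submonoid.powers (X : Polynomial k)) V v)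
            ∈ LinearMap.range (φ ^ m) ∧
        (φ ^ m) (σ (LocalizedModule.mkLinearMap
            (Submonoid.powers (X : Polynomial k)) V v)) = (φ ^ m) v) := by
  set f := algebraMap k[X] (End k[X] V) X
  have hpow (n : ℕ) : ⇑(f ^ n) = ⇑(φ ^ n) := by
    have hf : ⇑f = ⇑φ := by ext v; exact hφ v
    rw [End.coe_pow, End.coe_pow, hf]
  have hker_coe (n : ℕ) : (ker (f ^ n) : Set V) = ker (φ ^ n) := by ext; simp [hpow]
  have hrange_coe (n : ℕ) : (range (f ^ n) : Set V) = range (φ ^ n) := by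
    rw [coe_range, coe_range, hpow]
  have hkerf : ker (f ^ m) = ker (f ^ (m + 1)) :=
    SetLike.coe_injective <| by rw [hker_coe, hker_coe, hker]
  have hrangef : range (f ^ m) = range (f ^ (m + 1)) :=
    SetLike.coe_injective <| by rw [hrange_coe, hrange_coe, hrange]
  obtain rfl : Wm = range (f ^ m) := SetLike.coe_injective (hWm.trans (hrange_coe m).symm)
  have := isLocalizedModule_rangeRestrict_pow hkerf hrangef
  have hX := IsLocalizedModule.map_units (LocalizedModule.mkLinearMap (Submonoid.powers X) V)
    ⟨(X : k[X]), Submonoid.mem_powers X⟩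
  obtain ⟨σ₀, hσ₀⟩ := exists_mkLinearMap_comp_eq_id hkerf hrangef
  refine ⟨by rw [ker_mkLinearMap_eq_ker_pow hkerf hrangef, hker_coe],
    ⟨IsLocalizedModule.iso _ (f ^ m).rangeRestrict, fun v ↦ by simp [hpow]⟩,
    ⟨σ₀, hσ₀, fun σ hσ ↦ eq_of_mkLinearMap_comp_eq_id hkerf hrangef hσ hσ₀⟩,
    fun σ hσ v ↦ ⟨?_, ?_⟩⟩
  · rw [← SetLike.mem_coe, ← hrange_coe]
    exact range_le_range_algebraMap_end_pow hX σ m ⟨_, rfl⟩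
  · rw [← hpow]
    exact pow_apply_mkLinearMap_eq_of_comp_eq_id hkerf hrangef hσ v

theorem stmt_18 (k : Type*) [Field k] (V : Type*) [AddCommGroup V] [Module k V]
    [Module (Polynomial k) V] [IsScalarTower k (Polynomial k) V]
    (φ : V →ₗ[k] V) (hφ : ∀ v : V, (X : Polynomial k) • v = φ v)
    (m : ℕ)
    (hker : LinearMap.ker (φ ^ m) = LinearMap.ker (φ ^ (m + 1)))
    (hrange : LinearMap.range (φ ^ m) = LinearMap.range (φ ^ (m + 1)))
    (hmin : ∀ l : ℕ, l < m → ¬(LinearMap.ker (φ ^ l) = LinearMap.ker (φ ^ (l + 1)) ∧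
      LinearMap.range (φ ^ l) = LinearMap.range (φ ^ (l + 1))))
    (Wm : Submodule (Polynomial k) V)
    (hWm : (Wm : Set V) = (LinearMap.range (φ ^ m) : Set V)) :
    -- the localization sequence is naturally isomorphic to
    -- 0 → Ker(φ^m) → V → Im(φ^m) → 0
    (LinearMap.ker (LocalizedModule.mkLinearMap
        (Submonoid.powers (X : Polynomial k)) V) : Set V)
      = (LinearMap.ker (φ ^ m) : Set V) ∧
    (∃ e : LocalizedModule (Submonoid.powers (X : Polynomial k)) V ≃ₗ[Polynomial k] Wm,
      ∀ v : V, (e (LocalizedModule.mkLinearMap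
          (Submonoid.powers (X : Polynomial k)) V v) : V) = (φ ^ m) v) ∧
    -- existence and uniqueness of the k[x]-linear section, given by
    -- σ = j ∘ ((φ^m)|_{Im(φ^m)})⁻¹
    (∃! σ : LocalizedModule (Submonoid.powers (X : Polynomial k)) V →ₗ[Polynomial k] V,
      (LocalizedModule.mkLinearMap (Submonoid.powers (X : Polynomial k)) V) ∘ₗ σ
        = LinearMap.id) ∧
    (∀ σ : LocalizedModule (Submonoid.powers (X : Polynomial k)) V →ₗ[Polynomial k] V,
      (LocalizedModule.mkLinearMap (Submonoid.powers (X : Polynomial k)) V) ∘ₗ σ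
          = LinearMap.id →
      ∀ v : V,
        σ (LocalizedModule.mkLinearMap (Submonoid.powers (X : Polynomial k)) V v)
            ∈ LinearMap.range (φ ^ m) ∧
        (φ ^ m) (σ (LocalizedModule.mkLinearMap
            (Submonoid.powers (X : Polynomial k)) V v)) = (φ ^ m) v) :=
  stmt_18_general k V φ hφ m hker hrange Wm hWm
end

section
/- If φ is a core-nilpotent endomorphism of index m and α is its pointwise Drazin inverse (α ∘ φ ∘ α = α, α ∘ φ = φ ∘ α, φ̇ ∘ φ ∘ α = φ̇), then φ^{m+1} ∘ α = φᵐ; hence α is the Drazin inverse of φ. -/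
open Polynomial

theorem stmt_19 (k : Type*) [Field k] (V : Type*) [AddCommGroup V] [Module k V]
    [Module (Polynomial k) V] [IsScalarTower k (Polynomial k) V]
    (φ : V →ₗ[k] V) (hφ : ∀ v : V, (X : Polynomial k) • v = φ v)
    (m : ℕ)
    (hker : LinearMap.ker (φ ^ m) = LinearMap.ker (φ ^ (m + 1)))
    (hrange : LinearMap.range (φ ^ m) = LinearMap.range (φ ^ (m + 1)))
    (hmin : ∀ l : ℕ, l < m → ¬(LinearMap.ker (φ ^ l) = LinearMap.ker (φ ^ (l + 1)) ∧
      LinearMap.range (φ ^ l) = LinearMap.range (φ ^ (l + 1))))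
    (α : V →ₗ[k] V)
    (h1 : ∀ v : V, α (φ (α v)) = α v)
    (h2 : ∀ v : V, α (φ v) = φ (α v))
    (h3 : ∀ v : V, LocalizedModule.mkLinearMap (Submonoid.powers (X : Polynomial k)) V
        (φ (α v))
      = LocalizedModule.mkLinearMap (Submonoid.powers (X : Polynomial k)) V v) :
    ∀ v : V, (φ ^ (m + 1)) (α v) = (φ ^ m) v := by
  -- X^n acts as φ^n
  have hpow : ∀ (n : ℕ) (v : V), ((X : Polynomial k) ^ n) • v = (φ ^ n) v := by
    intro n
    induction n with
    | zero => intro v; simp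
    | succ n ih =>
      intro v
      rw [pow_succ, mul_smul, hφ v, ih (φ v), pow_succ, Module.End.mul_apply]
  intro v
  have h := h3 v
  simp only [LocalizedModule.mkLinearMap_apply] at h
  rw [LocalizedModule.mk_eq] at h
  obtain ⟨u, hu⟩ := h
  obtain ⟨n, hn⟩ := u.2
  simp only [one_smul] at hu
  have hn' : (X : Polynomial k) ^ n = (u : Polynomial k) := hn
  have hu2 : ((u : Polynomial k)) • φ (α v) = (u : Polynomial k) • v := hu
  rw [← hn', hpow, hpow] at hu2
  have hu' : (φ ^ n) (φ (α v)) = (φ ^ n) v := hu2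
  -- now use ker stabilization
  have key : (φ ^ m) (φ (α v) - v) = 0 := by
    have hw : (φ ^ n) (φ (α v) - v) = 0 := by
      rw [map_sub, hu', sub_self]
    rcases le_total n m with hnm | hmn
    · set w := φ (α v) - v with hwdef
      have : (φ ^ m) w = (φ ^ (m - n)) ((φ ^ n) w) := by
        rw [← Module.End.mul_apply, ← pow_add, Nat.sub_add_cancel hnm]
      rw [this, hw, map_zero]
    · have hk : LinearMap.ker (φ ^ m) = LinearMap.ker (φ ^ n) := by
        have := Module.End.ker_pow_constant hker (n - m)
        rwa [Nat.add_sub_cancel' hmn] at this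
      have : φ (α v) - v ∈ LinearMap.ker (φ ^ m) := by
        rw [hk]; exact hw
      exact this
  have : (φ ^ m) (φ (α v)) = (φ ^ m) v := by
    have := key
    rw [map_sub, sub_eq_zero] at this
    exact this
  calc (φ ^ (m + 1)) (α v) = (φ ^ m) (φ (α v)) := by
        rw [pow_succ, Module.End.mul_apply]
    _ = (φ ^ m) v := this
end
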